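/- arXiv:2110.05897 — 7 statements merged into one kernel-verified Lean document; each statement's English description precedes it below -/
import Mathlib

section
/- Let b₁ = (1/k) Σ_{l=1}^k p_{1,l} and b₂ = (1/k) Σ_{l=1}^k p_{2,l} be barycenters of two k-tuples of points in ℝ^D, with weights w(bᵢ) = −(1/k) Σ_l ‖bᵢ − p_{i,l}‖². Then the power distance D(b̂₁, b̂₂) := ‖b₁ − b₂‖² − w(b₁) − w(b₂) equals (1/k²) Σ_{l,s=1}^k ‖p_{1,l} − p_{2,s}‖². -/
/-!
The Huygens–Steiner identity `∑ ‖x - pᵢ‖² = k ‖x - b‖² + ∑ ‖b - pᵢ‖²` (the cross terms vanish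
since the deviations from the barycenter `b` sum to zero), applied first over the second tuple
with `x = p₁ₗ` and then over the first tuple with `x = b₂`, gives
`∑ₗ ∑ₛ ‖p₁ₗ - p₂ₛ‖² = k² ‖b₁ - b₂‖² - k² w(b₁) - k² w(b₂)`.
-/

open Finset

section Barycenter

variable {ι κ E : Type*} [Fintype ι] [Fintype κ] [NormedAddCommGroup E] [InnerProductSpace ℝ E]

noncomputable def barycenter (p : ι → E) : E :=
  (Fintype.card ι : ℝ)⁻¹ • ∑ i, p i

theorem sum_barycenter_sub (p : ι → E) : ∑ i, (barycenter p - p i) = 0 := by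
  rcases isEmpty_or_nonempty ι with _ | _
  · simp
  · have hcard : (Fintype.card ι : ℝ) ≠ 0 := Nat.cast_ne_zero.mpr Fintype.card_ne_zero
    rw [sum_sub_distrib, sum_const, card_univ, barycenter, ← Nat.cast_smul_eq_nsmul ℝ,
      smul_smul, mul_inv_cancel₀ hcard, one_smul, sub_self]

theorem sum_norm_sub_sq_eq_card_mul_add (p : ι → E) (x : E) :
    ∑ i, ‖x - p i‖ ^ 2 =
      Fintype.card ι * ‖x - barycenter p‖ ^ 2 + ∑ i, ‖barycenter p - p i‖ ^ 2 := by
  have hsplit : ∀ i, ‖x - p i‖ ^ 2 = ‖x - barycenter p‖ ^ 2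
      + 2 * inner ℝ (x - barycenter p) (barycenter p - p i) + ‖barycenter p - p i‖ ^ 2 := by
    intro i
    rw [← norm_add_sq_real, sub_add_sub_cancel]
  simp only [hsplit, sum_add_distrib, sum_const, card_univ, nsmul_eq_mul, ← mul_sum,
    ← inner_sum, sum_barycenter_sub, inner_zero_right, mul_zero, add_zero]

theorem sum_sum_norm_sub_sq (p : ι → E) (q : κ → E) :
    ∑ i, ∑ j, ‖p i - q j‖ ^ 2 =
      Fintype.card ι * Fintype.card κ * ‖barycenter p - barycenter q‖ ^ 2
        + Fintype.card κ * ∑ i, ‖barycenter p - p i‖ ^ 2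
        + Fintype.card ι * ∑ j, ‖barycenter q - q j‖ ^ 2 := by
  have hp : ∑ i, ‖p i - barycenter q‖ ^ 2 =
      Fintype.card ι * ‖barycenter p - barycenter q‖ ^ 2 + ∑ i, ‖barycenter p - p i‖ ^ 2 := by
    simp only [norm_sub_rev (p _) (barycenter q)]
    rw [sum_norm_sub_sq_eq_card_mul_add p, norm_sub_rev]
  have hq : ∀ i, ∑ j, ‖p i - q j‖ ^ 2 =
      Fintype.card κ * ‖p i - barycenter q‖ ^ 2 + ∑ j, ‖barycenter q - q j‖ ^ 2 :=
    fun i ↦ sum_norm_sub_sq_eq_card_mul_add q (p i)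
  simp only [hq, sum_add_distrib, ← mul_sum, hp, sum_const, card_univ, nsmul_eq_mul]
  ring

end Barycenter

theorem stmt_3 {D k : ℕ} (hk : 0 < k)
    (p₁ p₂ : Fin k → EuclideanSpace ℝ (Fin D))
    (b₁ b₂ : EuclideanSpace ℝ (Fin D))
    (hb₁ : b₁ = (1 / (k : ℝ)) • ∑ l, p₁ l)
    (hb₂ : b₂ = (1 / (k : ℝ)) • ∑ l, p₂ l)
    (w₁ w₂ : ℝ)
    (hw₁ : w₁ = -((1 / (k : ℝ)) * ∑ l, ‖b₁ - p₁ l‖ ^ 2))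
    (hw₂ : w₂ = -((1 / (k : ℝ)) * ∑ l, ‖b₂ - p₂ l‖ ^ 2)) :
    ‖b₁ - b₂‖ ^ 2 - w₁ - w₂ =
      (1 / (k : ℝ) ^ 2) * ∑ l, ∑ s, ‖p₁ l - p₂ s‖ ^ 2 := by
  have hb : ∀ p : Fin k → EuclideanSpace ℝ (Fin D), barycenter p = (1 / (k : ℝ)) • ∑ l, p l := by
    simp [barycenter]
  rw [← hb] at hb₁ hb₂
  subst hb₁ hb₂ hw₁ hw₂
  rw [sum_sum_norm_sub_sq, Fintype.card_fin]
  have hk' : (k : ℝ) ≠ 0 := by positivity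
  field_simp
  ring
end

section
/- Let X̂ = {(pᵢ, wᵢ)} be weighted points in ℝ^D, c = c(X̂) its weighted center, I the set of indices with D(c,(pᵢ,wᵢ)) = rad²(X̂), and λᵢ > 0 (i ∈ I), Σλᵢ = 1 with c = Σ_{i∈I} λᵢ pᵢ. Then rad²(X̂) = (1/2) Σ_{i,j∈I} λᵢ λⱼ D((pᵢ,wᵢ),(pⱼ,wⱼ)), where D((pᵢ,wᵢ),(pⱼ,wⱼ)) = ‖pᵢ − pⱼ‖² − wᵢ − wⱼ. -/
/-!
Every index `i ∈ I` attains the maximum, so `‖c - pᵢ‖² - wᵢ = rad²` there. Expanding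
`‖pᵢ - pⱼ‖²` around `c`, the cross terms `∑ λᵢ λⱼ ⟪pᵢ - c, pⱼ - c⟫ = ‖∑ λᵢ (pᵢ - c)‖²` vanish
because `c` is the `λ`-barycentre of the `pᵢ`; hence half the double sum of power distances is
`∑ λᵢ (‖c - pᵢ‖² - wᵢ) = rad²`.
-/

open Finset

section Barycentre

variable {ι E : Type*} [NormedAddCommGroup E] [InnerProductSpace ℝ E]
  {s : Finset ι} {lam : ι → ℝ} {p : ι → E} {c : E}

lemma sum_smul_sub_eq_zero_of_eq_sum_smul (hsum : ∑ i ∈ s, lam i = 1)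
    (hc : c = ∑ i ∈ s, lam i • p i) : ∑ i ∈ s, lam i • (p i - c) = 0 := by
  simp only [smul_sub]
  rw [sum_sub_distrib, ← sum_smul, hsum, one_smul, ← hc, sub_self]

lemma sum_sum_mul_inner_eq_inner_sum_smul (s : Finset ι) (lam : ι → ℝ) (u : ι → E) :
    ∑ i ∈ s, ∑ j ∈ s, lam i * lam j * inner ℝ (u i) (u j) =
      inner ℝ (∑ i ∈ s, lam i • u i) (∑ j ∈ s, lam j • u j) := by
  rw [sum_inner]
  refine sum_congr rfl fun i _ => ?_
  rw [real_inner_smul_left, inner_sum, mul_sum]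
  refine sum_congr rfl fun j _ => ?_
  rw [real_inner_smul_right]
  ring

lemma sum_sum_mul_norm_sub_sq_eq_two_mul_sum (hsum : ∑ i ∈ s, lam i = 1)
    (hc : c = ∑ i ∈ s, lam i • p i) :
    ∑ i ∈ s, ∑ j ∈ s, lam i * lam j * ‖p i - p j‖ ^ 2 = 2 * ∑ i ∈ s, lam i * ‖c - p i‖ ^ 2 := by
  have expand : ∀ i j, ‖p i - p j‖ ^ 2 =
      ‖c - p i‖ ^ 2 + ‖c - p j‖ ^ 2 - 2 * inner ℝ (p i - c) (p j - c) := by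
    intro i j
    rw [show p i - p j = (p i - c) - (p j - c) by abel, norm_sub_sq_real, norm_sub_rev c,
      norm_sub_rev c]
    ring
  have cross : ∑ i ∈ s, ∑ j ∈ s, lam i * lam j * inner ℝ (p i - c) (p j - c) = 0 := by
    rw [sum_sum_mul_inner_eq_inner_sum_smul, sum_smul_sub_eq_zero_of_eq_sum_smul hsum hc,
      inner_zero_left]
  have termwise : ∀ i j, lam i * lam j * ‖p i - p j‖ ^ 2 = lam j * (lam i * ‖c - p i‖ ^ 2) +
      lam i * (lam j * ‖c - p j‖ ^ 2) - 2 * (lam i * lam j * inner ℝ (p i - c) (p j - c)) := by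
    intro i j
    rw [expand]
    ring
  simp only [termwise, sum_add_distrib, sum_sub_distrib, ← sum_mul, ← mul_sum, cross, hsum]
  ring

lemma half_sum_sum_mul_powerDist_eq_sum (w : ι → ℝ) (hsum : ∑ i ∈ s, lam i = 1)
    (hc : c = ∑ i ∈ s, lam i • p i) :
    (1 / 2) * ∑ i ∈ s, ∑ j ∈ s, lam i * lam j * (‖p i - p j‖ ^ 2 - w i - w j) =
      ∑ i ∈ s, lam i * (‖c - p i‖ ^ 2 - w i) := by
  have termwise : ∀ i j, lam i * lam j * (‖p i - p j‖ ^ 2 - w i - w j) =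
      lam i * lam j * ‖p i - p j‖ ^ 2 - lam j * (lam i * w i) - lam i * (lam j * w j) := by
    intro i j
    ring
  simp only [termwise, sum_sub_distrib, ← sum_mul, ← mul_sum, hsum, mul_sub,
    sum_sum_mul_norm_sub_sq_eq_two_mul_sum hsum hc]
  ring

end Barycentre

theorem stmt_7_general {D m : ℕ}
    (p : Fin m → EuclideanSpace ℝ (Fin D)) (w : Fin m → ℝ)
    (hne : (Finset.univ : Finset (Fin m)).Nonempty)
    (c : EuclideanSpace ℝ (Fin D))
    (I : Finset (Fin m))
    (hI : I = Finset.univ.filter (fun i =>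
      ‖c - p i‖ ^ 2 - w i = Finset.univ.sup' hne (fun j => ‖c - p j‖ ^ 2 - w j)))
    (lam : Fin m → ℝ)
    (hsum : ∑ i ∈ I, lam i = 1) (hcc : c = ∑ i ∈ I, lam i • p i) :
    Finset.univ.sup' hne (fun i => ‖c - p i‖ ^ 2 - w i) =
      (1 / 2) * ∑ i ∈ I, ∑ j ∈ I, lam i * lam j * (‖p i - p j‖ ^ 2 - w i - w j) := by
  have attains : ∀ i ∈ I, ‖c - p i‖ ^ 2 - w i = univ.sup' hne (fun j => ‖c - p j‖ ^ 2 - w j) := by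
    intro i hi
    rw [hI] at hi
    exact (mem_filter.mp hi).2
  rw [half_sum_sum_mul_powerDist_eq_sum w hsum hcc,
    sum_congr rfl fun i hi => congrArg (lam i * ·) (attains i hi), ← sum_mul, hsum, one_mul]

theorem stmt_7 {D m : ℕ}
    (p : Fin m → EuclideanSpace ℝ (Fin D)) (w : Fin m → ℝ)
    (hne : (Finset.univ : Finset (Fin m)).Nonempty)
    (c : EuclideanSpace ℝ (Fin D))
    (hc : ∀ y, Finset.univ.sup' hne (fun i => ‖c - p i‖ ^ 2 - w i) ≤
          Finset.univ.sup' hne (fun i => ‖y - p i‖ ^ 2 - w i))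
    (I : Finset (Fin m))
    (hI : I = Finset.univ.filter (fun i =>
      ‖c - p i‖ ^ 2 - w i = Finset.univ.sup' hne (fun j => ‖c - p j‖ ^ 2 - w j)))
    (lam : Fin m → ℝ) (hpos : ∀ i ∈ I, 0 < lam i)
    (hsum : ∑ i ∈ I, lam i = 1) (hcc : c = ∑ i ∈ I, lam i • p i) :
    Finset.univ.sup' hne (fun i => ‖c - p i‖ ^ 2 - w i) =
      (1 / 2) * ∑ i ∈ I, ∑ j ∈ I, lam i * lam j * (‖p i - p j‖ ^ 2 - w i - w j) :=
  stmt_7_general p w hne c I hI lam hsum hcc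
end

section
/- Let P ⊂ ℝ^D be finite and define the approximate k-distance d̃_{P,k}(x) = min_{p∈P} sqrt(‖x−p‖² + d²_{P,k}(p)). Then for all x ∈ ℝ^D, (1/√2)·d_{P,k}(x) ≤ d̃_{P,k}(x) ≤ √3·d_{P,k}(x). -/
/-!
Comparing `x` with the `k` nearest neighbours of a data point `p i`, the inequality
`‖a - c‖² ≤ 2‖a - b‖² + 2‖b - c‖²` gives `d²(x) ≤ 2 (‖x - p i‖² + d²(p i))`, whence the lower
bound. For the upper bound let `S` be the `k` nearest neighbours of `x`. The variance identity
`∑ⱼ ∑ₗ ‖uⱼ - uₗ‖² = 2k ∑ⱼ ‖uⱼ - x‖² - 2k² ‖ū - x‖²` shows that the `d²(p j)`, `j ∈ S`, sum to at most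
`2k d²(x)`, so the power distances `‖x - p j‖² + d²(p j)` average at most `3 d²(x)` over `S`.
-/

open Finset

/-- The squared `k`-distance of `x` to the point family `p`. -/
noncomputable def kDist2 {n : ℕ} {E : Type*} [NormedAddCommGroup E]
    (p : Fin n → E) (k : ℕ) (hk : k ≤ n) (x : E) : ℝ :=
  ((Finset.univ : Finset (Fin n)).powersetCard k).inf'
    (Finset.powersetCard_nonempty.mpr (by simpa using hk))
    (fun S => (1 / (k : ℝ)) * ∑ i ∈ S, ‖x - p i‖ ^ 2)

section NormedAddCommGroup

variable {n : ℕ} {E : Type*} [NormedAddCommGroup E] (p : Fin n → E) (k : ℕ) (hk : k ≤ n)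

noncomputable def approxKDist2 (hn : 0 < n) (x : E) : ℝ :=
  (univ : Finset (Fin n)).inf' (univ_nonempty_iff.mpr ⟨⟨0, hn⟩⟩)
    (fun i => ‖x - p i‖ ^ 2 + kDist2 p k hk (p i))

lemma kDist2_le_of_card_eq (x : E) {S : Finset (Fin n)} (hS : #S = k) :
    kDist2 p k hk x ≤ (1 / (k : ℝ)) * ∑ i ∈ S, ‖x - p i‖ ^ 2 :=
  inf'_le _ (mem_powersetCard.mpr ⟨subset_univ S, hS⟩)

lemma exists_card_eq_kDist2_eq (x : E) :
    ∃ S : Finset (Fin n), #S = k ∧ kDist2 p k hk x = (1 / (k : ℝ)) * ∑ i ∈ S, ‖x - p i‖ ^ 2 := by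
  obtain ⟨S, hS, h⟩ := exists_mem_eq_inf' (s := (univ : Finset (Fin n)).powersetCard k)
    (powersetCard_nonempty.mpr (by simpa using hk))
    (fun S : Finset (Fin n) => (1 / (k : ℝ)) * ∑ i ∈ S, ‖x - p i‖ ^ 2)
  exact ⟨S, (mem_powersetCard.mp hS).2, h⟩

lemma norm_sub_sq_le_two_mul (a b c : E) : ‖a - c‖ ^ 2 ≤ 2 * (‖a - b‖ ^ 2 + ‖b - c‖ ^ 2) :=
  (pow_le_pow_left₀ (norm_nonneg _) (norm_sub_le_norm_sub_add_norm_sub a b c) 2).trans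
    add_sq_le

lemma kDist2_le_two_mul (x y : E) :
    kDist2 p k hk x ≤ 2 * (‖x - y‖ ^ 2 + kDist2 p k hk y) := by
  obtain ⟨S, hS, hy⟩ := exists_card_eq_kDist2_eq p k hk y
  calc kDist2 p k hk x
      ≤ (1 / (k : ℝ)) * ∑ i ∈ S, ‖x - p i‖ ^ 2 := kDist2_le_of_card_eq p k hk x hS
    _ ≤ (1 / (k : ℝ)) * ∑ i ∈ S, 2 * (‖x - y‖ ^ 2 + ‖y - p i‖ ^ 2) := by
        gcongr with i
        exact norm_sub_sq_le_two_mul x y (p i)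
    _ = 2 * ((k : ℝ) / k * ‖x - y‖ ^ 2 + kDist2 p k hk y) := by
        rw [hy, ← mul_sum, sum_add_distrib, sum_const, hS, nsmul_eq_mul]
        ring
    _ ≤ 2 * (‖x - y‖ ^ 2 + kDist2 p k hk y) := by
        gcongr
        -- `k / k ≤ 1` also holds for `k = 0`, where `kDist2` is identically `0`
        exact mul_le_of_le_one_left (sq_nonneg _) (div_self_le_one _)

lemma kDist2_le_two_mul_approxKDist2 (hn : 0 < n) (x : E) :
    kDist2 p k hk x ≤ 2 * approxKDist2 p k hk hn x := by
  rw [← div_le_iff₀' two_pos]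
  exact le_inf' _ _ fun i _ => by
    rw [div_le_iff₀' two_pos]
    exact kDist2_le_two_mul p k hk x (p i)

end NormedAddCommGroup

section InnerProductSpace

variable {E : Type*} [NormedAddCommGroup E] [InnerProductSpace ℝ E]

lemma sum_sum_norm_sub_sq_le {ι : Type*} (s : Finset ι) (u : ι → E) (x : E) :
    ∑ j ∈ s, ∑ l ∈ s, ‖u j - u l‖ ^ 2 ≤ 2 * #s * ∑ j ∈ s, ‖x - u j‖ ^ 2 := by
  set v : ι → E := fun j => u j - x
  have hv : ∀ j l, u j - u l = v j - v l := fun j l => by simp only [v]; abel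
  have variance : ∑ j ∈ s, ∑ l ∈ s, ‖v j - v l‖ ^ 2
      = 2 * #s * ∑ j ∈ s, ‖v j‖ ^ 2 - 2 * ‖∑ j ∈ s, v j‖ ^ 2 := by
    simp only [norm_sub_sq_real, sum_add_distrib, sum_sub_distrib, sum_const, nsmul_eq_mul,
      ← mul_sum, ← inner_sum, ← sum_inner, real_inner_self_eq_norm_sq]
    ring
  simp only [hv, variance, norm_sub_rev x, v]
  nlinarith [sq_nonneg ‖∑ j ∈ s, v j‖]

variable {n : ℕ} (p : Fin n → E) (k : ℕ) (hk : k ≤ n)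

lemma sum_kDist2_le_of_card_eq (x : E) {S : Finset (Fin n)} (hS : #S = k) :
    ∑ j ∈ S, kDist2 p k hk (p j) ≤ 2 * ∑ j ∈ S, ‖x - p j‖ ^ 2 := by
  calc ∑ j ∈ S, kDist2 p k hk (p j)
      ≤ ∑ j ∈ S, (1 / (k : ℝ)) * ∑ l ∈ S, ‖p j - p l‖ ^ 2 :=
        sum_le_sum fun j _ => kDist2_le_of_card_eq p k hk (p j) hS
    _ ≤ (1 / (k : ℝ)) * (2 * #S * ∑ j ∈ S, ‖x - p j‖ ^ 2) := by
        rw [← mul_sum]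
        gcongr
        exact sum_sum_norm_sub_sq_le S p x
    _ = (k : ℝ) / k * (2 * ∑ j ∈ S, ‖x - p j‖ ^ 2) := by
        rw [hS]
        ring
    _ ≤ 2 * ∑ j ∈ S, ‖x - p j‖ ^ 2 :=
        mul_le_of_le_one_left (by positivity) (div_self_le_one _)

lemma approxKDist2_le_three_mul_kDist2 (hn : 0 < n) (hk0 : 0 < k) (x : E) :
    approxKDist2 p k hk hn x ≤ 3 * kDist2 p k hk x := by
  obtain ⟨S, hS, hx⟩ := exists_card_eq_kDist2_eq p k hk x
  have hS_ne : S.Nonempty := card_pos.mp (hS ▸ hk0)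
  have hsum : ∑ j ∈ S, (‖x - p j‖ ^ 2 + kDist2 p k hk (p j)) ≤ ∑ _j ∈ S, 3 * kDist2 p k hk x := by
    rw [sum_add_distrib, sum_const, hS, nsmul_eq_mul, hx]
    field_simp
    linarith [sum_kDist2_le_of_card_eq p k hk x hS]
  obtain ⟨j, -, hj⟩ := exists_le_of_sum_le hS_ne hsum
  exact (inf'_le _ (mem_univ j)).trans hj

end InnerProductSpace

theorem stmt_12 {D n k : ℕ} (hn : 0 < n) (hk0 : 0 < k) (hk : k ≤ n)
    (p : Fin n → EuclideanSpace ℝ (Fin D)) (x : EuclideanSpace ℝ (Fin D)) :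
    (1 / Real.sqrt 2) * Real.sqrt (kDist2 p k hk x) ≤
      Real.sqrt (Finset.univ.inf' (Finset.univ_nonempty_iff.mpr ⟨⟨0, hn⟩⟩)
        (fun i => ‖x - p i‖ ^ 2 + kDist2 p k hk (p i))) ∧
    Real.sqrt (Finset.univ.inf' (Finset.univ_nonempty_iff.mpr ⟨⟨0, hn⟩⟩)
        (fun i => ‖x - p i‖ ^ 2 + kDist2 p k hk (p i))) ≤
      Real.sqrt 3 * Real.sqrt (kDist2 p k hk x) := by
  change _ ≤ Real.sqrt (approxKDist2 p k hk hn x) ∧ Real.sqrt (approxKDist2 p k hk hn x) ≤ _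
  constructor
  · rw [one_div_mul_eq_div, div_le_iff₀ (by positivity), ← Real.sqrt_mul' _ zero_le_two]
    exact Real.sqrt_le_sqrt (by linarith [kDist2_le_two_mul_approxKDist2 p k hk hn x])
  · rw [← Real.sqrt_mul zero_le_three]
    exact Real.sqrt_le_sqrt (approxKDist2_le_three_mul_kDist2 p k hk hn hk0 x)
end

section
/- Let P ⊂ ℝ^D be a finite set of n points and f : ℝ^D → ℝ^d linear with (1−ε)‖x−y‖ ≤ ‖f(x)−f(y)‖ ≤ (1+ε)‖x−y‖ for all x,y ∈ P. Assign weights w(p) = −d²_{P,k}(p) to each p ∈ P and the recomputed weights w(f(p)) = −d²_{f(P),k}(f(p)) to image points. Let σ̂ ⊆ P̂ be any subset of these weighted points. Then (1−ε)²·rad²(σ̂) ≤ rad²(f(σ)^) ≤ (1+ε)²·rad²(σ̂). -/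
open Finset

/-- The squared radius of a nonempty finite family of weighted points:
the infimum over centers of the maximum power distance. -/
noncomputable def rad2On {E : Type*} [NormedAddCommGroup E] {ι : Type*}
    (σ : Finset ι) (hσ : σ.Nonempty) (p : ι → E) (w : ι → ℝ) : ℝ :=
  ⨅ x : E, σ.sup' hσ (fun i => ‖x - p i‖ ^ 2 - w i)

/-! The squared radius of weighted points `(pᵢ, wᵢ)` is the maximum over the standard simplex of
the dual objective `½ Σ λᵢλⱼ‖pᵢ - pⱼ‖² - Σ λᵢwᵢ`: for every `λ` and `x`, the `λ`-average of the
power distances to `x` is that objective plus `‖x - Σ λᵢpᵢ‖²` (weak duality), and at a maximiser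
`λ` no power distance to `Σ λᵢpᵢ` exceeds the objective, since otherwise moving `λ` slightly
towards that vertex would increase it. The objective only involves pairwise squared distances
and weights, and the `k`-distances, hence the weights `-d²`, are compared exactly like pairwise
distances, so the distortion bounds pass to the radius through a common maximiser. -/

section PowerDual

variable {E : Type*} [NormedAddCommGroup E] {ι : Type*} [Fintype ι]

noncomputable def powerDual (p : ι → E) (w : ι → ℝ) (l : ι → ℝ) : ℝ :=
  (1 / 2) * ∑ i, ∑ j, l i * l j * ‖p i - p j‖ ^ 2 - ∑ i, l i * w i

theorem mul_powerDual_le_mul_powerDual {F : Type*} [NormedAddCommGroup F] {p : ι → E} {q : ι → F}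
    {w v l : ι → ℝ} {a b : ℝ} (hl : ∀ i, 0 ≤ l i)
    (hpq : ∀ i j, a * ‖p i - p j‖ ^ 2 ≤ b * ‖q i - q j‖ ^ 2) (hwv : ∀ i, b * v i ≤ a * w i) :
    a * powerDual p w l ≤ b * powerDual q v l := by
  have hdist : a * ∑ i, ∑ j, l i * l j * ‖p i - p j‖ ^ 2 ≤
      b * ∑ i, ∑ j, l i * l j * ‖q i - q j‖ ^ 2 := by
    simp_rw [mul_sum]
    refine sum_le_sum fun i _ => sum_le_sum fun j _ => ?_
    linear_combination mul_le_mul_of_nonneg_left (hpq i j) (mul_nonneg (hl i) (hl j))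
  have hweight : b * ∑ i, l i * v i ≤ a * ∑ i, l i * w i := by
    simp_rw [mul_sum]
    exact sum_le_sum fun i _ => by linear_combination mul_le_mul_of_nonneg_left (hwv i) (hl i)
  unfold powerDual
  linarith

variable [InnerProductSpace ℝ E] {p : ι → E} {l : ι → ℝ}

theorem sum_mul_norm_sub_sq (hl : ∑ i, l i = 1) (x : E) :
    ∑ i, l i * ‖x - p i‖ ^ 2 =
      ‖x‖ ^ 2 - 2 * inner ℝ x (∑ i, l i • p i) + ∑ i, l i * ‖p i‖ ^ 2 := by
  simp_rw [norm_sub_sq_real, mul_add, mul_sub, sum_add_distrib, sum_sub_distrib, ← sum_mul, hl,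
    inner_sum, real_inner_smul_right, mul_sum]
  ring_nf

theorem sum_sum_mul_norm_sub_sq (hl : ∑ i, l i = 1) :
    ∑ i, ∑ j, l i * l j * ‖p i - p j‖ ^ 2 =
      2 * (∑ i, l i * ‖p i‖ ^ 2 - ‖∑ i, l i • p i‖ ^ 2) := by
  have hc : ∑ i, l i * inner ℝ (p i) (∑ j, l j • p j) = ‖∑ i, l i • p i‖ ^ 2 := by
    simp_rw [← real_inner_smul_left, ← sum_inner, real_inner_self_eq_norm_sq]
  simp_rw [mul_assoc, ← mul_sum, sum_mul_norm_sub_sq hl, mul_add, mul_sub, sum_add_distrib,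
    sum_sub_distrib, ← sum_mul, hl, mul_left_comm _ (2 : ℝ), ← mul_sum, hc]
  ring

variable (p) (w : ι → ℝ)

theorem sum_mul_power_sub_eq (hl : ∑ i, l i = 1) (x : E) :
    ∑ i, l i * (‖x - p i‖ ^ 2 - w i) = powerDual p w l + ‖x - ∑ i, l i • p i‖ ^ 2 := by
  rw [powerDual, sum_sum_mul_norm_sub_sq hl, norm_sub_sq_real]
  simp_rw [mul_sub, sum_sub_distrib, sum_mul_norm_sub_sq hl, ← real_inner_self_eq_norm_sq]
  ring

theorem powerDual_le_sup' [Nonempty ι] (hl : l ∈ stdSimplex ℝ ι) (x : E) :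
    powerDual p w l ≤ univ.sup' univ_nonempty fun i => ‖x - p i‖ ^ 2 - w i :=
  calc powerDual p w l
      ≤ ∑ i, l i * (‖x - p i‖ ^ 2 - w i) := by
        rw [sum_mul_power_sub_eq p w hl.2]; exact le_add_of_nonneg_right (sq_nonneg _)
    _ ≤ ∑ i, l i * univ.sup' univ_nonempty fun i => ‖x - p i‖ ^ 2 - w i :=
        sum_le_sum fun i hi =>
          mul_le_mul_of_nonneg_left (le_sup' (fun i => ‖x - p i‖ ^ 2 - w i) hi) (hl.1 i)
    _ = _ := by rw [← sum_mul, hl.2, one_mul]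

theorem powerDual_smul_add_smul_single [DecidableEq ι] (hl : ∑ i, l i = 1) (i : ι) (t : ℝ) :
    powerDual p w ((1 - t) • l + t • Pi.single i 1) =
      (1 - t) * powerDual p w l + t * (‖∑ j, l j • p j - p i‖ ^ 2 - w i) -
        t ^ 2 * ‖∑ j, l j • p j - p i‖ ^ 2 := by
  set c := ∑ j, l j • p j
  set m := (1 - t) • l + t • Pi.single i 1 with hm
  have hm1 : ∑ j, m j = 1 := by simp [hm, sum_add_distrib, ← mul_sum, hl]
  have hcm : c - ∑ j, m j • p j = t • (c - p i) := by
    simp only [hm, c, Pi.add_apply, Pi.smul_apply, smul_eq_mul, Pi.single_apply, mul_ite, mul_one,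
      mul_zero, add_smul, mul_smul, ite_smul, zero_smul, sum_add_distrib, ← smul_sum, sum_ite_eq',
      mem_univ, ↓reduceIte]
    module
  have key := sum_mul_power_sub_eq p w hm1 c
  rw [hcm, norm_smul, mul_pow, Real.norm_eq_abs, sq_abs] at key
  have hsplit : ∑ j, m j * (‖c - p j‖ ^ 2 - w j) =
      (1 - t) * ∑ j, l j * (‖c - p j‖ ^ 2 - w j) + t * (‖c - p i‖ ^ 2 - w i) := by
    simp [hm, add_mul, mul_assoc, sum_add_distrib, ← mul_sum, Pi.single_apply]
  rw [hsplit, sum_mul_power_sub_eq p w hl, sub_self, norm_zero] at key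
  linarith

theorem exists_mem_stdSimplex_forall_le_powerDual [Nonempty ι] :
    ∃ l ∈ stdSimplex ℝ ι, ∀ i, ‖∑ j, l j • p j - p i‖ ^ 2 - w i ≤ powerDual p w l := by
  classical
  obtain ⟨l, hl, hmax⟩ := (isCompact_stdSimplex ℝ ι).exists_isMaxOn
    ⟨_, single_mem_stdSimplex ℝ (Classical.arbitrary ι)⟩
    (by unfold powerDual; fun_prop : Continuous (powerDual p w)).continuousOn
  refine ⟨l, hl, fun i => ?_⟩
  set g := ‖∑ j, l j • p j - p i‖ ^ 2 - w i - powerDual p w l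
  set B := ‖∑ j, l j • p j - p i‖ ^ 2
  -- Moving from the maximiser `l` towards the vertex `i` changes `powerDual` by `t g - t² B`.
  have hle : ∀ t ∈ Set.Ioc (0 : ℝ) 1, g ≤ t * B := by
    rintro t ⟨ht0, ht1⟩
    have hmem := convex_stdSimplex ℝ ι hl (single_mem_stdSimplex ℝ i) (sub_nonneg.2 ht1) ht0.le
      (by ring)
    have : powerDual p w _ ≤ powerDual p w l := hmax hmem
    rw [powerDual_smul_add_smul_single p w hl.2] at this
    nlinarith
  have hlim : Filter.Tendsto (fun t => t * B) (nhdsWithin 0 (Set.Ioi 0)) (nhds 0) := by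
    simpa using (tendsto_nhdsWithin_of_tendsto_nhds (a := (0 : ℝ)) Filter.tendsto_id).mul_const B
  have := ge_of_tendsto hlim (Filter.eventually_of_mem (Ioc_mem_nhdsGT zero_lt_one) hle)
  linarith

theorem isGreatest_rad2On_univ [Nonempty ι] :
    IsGreatest (powerDual p w '' stdSimplex ℝ ι) (rad2On univ univ_nonempty p w) := by
  obtain ⟨l, hl, hcenter⟩ := exists_mem_stdSimplex_forall_le_powerDual p w
  have hle : ∀ m ∈ stdSimplex ℝ ι, powerDual p w m ≤ rad2On univ univ_nonempty p w :=
    fun m hm => le_ciInf (powerDual_le_sup' p w hm)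
  refine ⟨⟨l, hl, le_antisymm (hle l hl) ?_⟩, ?_⟩
  · exact (ciInf_le ⟨_, Set.forall_mem_range.2 (powerDual_le_sup' p w hl)⟩ (∑ j, l j • p j)).trans
      (sup'_le _ _ fun i _ => hcenter i)
  · rintro _ ⟨m, hm, rfl⟩
    exact hle m hm

end PowerDual

theorem rad2On_eq_rad2On_univ {E : Type*} [NormedAddCommGroup E] {ι : Type*} {σ : Finset ι}
    (hσ : σ.Nonempty) (p : ι → E) (w : ι → ℝ) :
    haveI := hσ.to_subtype
    rad2On σ hσ p w = rad2On univ univ_nonempty (fun i : σ => p i) (fun i => w i) := by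
  refine iInf_congr fun x => le_antisymm (sup'_le _ _ fun i hi => ?_) (sup'_le _ _ fun i _ => ?_)
  · exact le_sup' (fun i : σ => ‖x - p i‖ ^ 2 - w i) (mem_univ ⟨i, hi⟩)
  · exact le_sup' (fun i => ‖x - p i‖ ^ 2 - w i) i.2

theorem mul_rad2On_le_mul_rad2On {E F : Type*} [NormedAddCommGroup E] [InnerProductSpace ℝ E]
    [NormedAddCommGroup F] [InnerProductSpace ℝ F] {ι : Type*} {σ : Finset ι} (hσ : σ.Nonempty)
    {p : ι → E} {q : ι → F} {w v : ι → ℝ} {a b : ℝ} (hb : 0 ≤ b)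
    (hpq : ∀ i ∈ σ, ∀ j ∈ σ, a * ‖p i - p j‖ ^ 2 ≤ b * ‖q i - q j‖ ^ 2)
    (hwv : ∀ i ∈ σ, b * v i ≤ a * w i) :
    a * rad2On σ hσ p w ≤ b * rad2On σ hσ q v := by
  have := hσ.to_subtype
  rw [rad2On_eq_rad2On_univ hσ p w, rad2On_eq_rad2On_univ hσ q v]
  obtain ⟨⟨l, hl, hrad⟩, -⟩ := isGreatest_rad2On_univ (fun i : σ => p i) (fun i => w i)
  rw [← hrad]
  exact (mul_powerDual_le_mul_powerDual hl.1 (fun i j => hpq i i.2 j j.2) fun i => hwv i i.2).trans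
    (mul_le_mul_of_nonneg_left ((isGreatest_rad2On_univ _ _).2 ⟨l, hl, rfl⟩) hb)

theorem mul_kDist2_le_mul_kDist2 {n : ℕ} {E F : Type*} [NormedAddCommGroup E]
    [NormedAddCommGroup F] {p : Fin n → E} {q : Fin n → F} {k : ℕ} (hk : k ≤ n) {x : E} {y : F}
    {a b : ℝ} (ha : 0 ≤ a) (h : ∀ j, a * ‖x - p j‖ ^ 2 ≤ b * ‖y - q j‖ ^ 2) :
    a * kDist2 p k hk x ≤ b * kDist2 q k hk y := by
  unfold kDist2
  obtain ⟨S, hS, hmin⟩ := exists_mem_eq_inf' (s := univ.powersetCard k)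
    (powersetCard_nonempty.mpr (by simpa using hk)) fun S => (1 / (k : ℝ)) * ∑ j ∈ S, ‖y - q j‖ ^ 2
  rw [hmin]
  calc a * _ ≤ a * ((1 / (k : ℝ)) * ∑ j ∈ S, ‖x - p j‖ ^ 2) :=
        mul_le_mul_of_nonneg_left (inf'_le _ hS) ha
    _ = (1 / (k : ℝ)) * ∑ j ∈ S, a * ‖x - p j‖ ^ 2 := by
        rw [mul_left_comm, mul_sum]
    _ ≤ (1 / (k : ℝ)) * ∑ j ∈ S, b * ‖y - q j‖ ^ 2 :=
        mul_le_mul_of_nonneg_left (sum_le_sum fun j _ => h j) (by positivity)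
    _ = b * ((1 / (k : ℝ)) * ∑ j ∈ S, ‖y - q j‖ ^ 2) := by
        rw [← mul_sum, mul_left_comm]

theorem stmt_13_general {D d n k : ℕ} (hk : k ≤ n)
    (ε : ℝ) (hε1 : ε < 1)
    (p : Fin n → EuclideanSpace ℝ (Fin D))
    (f : EuclideanSpace ℝ (Fin D) →ₗ[ℝ] EuclideanSpace ℝ (Fin d))
    (hf : ∀ i j : Fin n,
      (1 - ε) * ‖p i - p j‖ ≤ ‖f (p i) - f (p j)‖ ∧
      ‖f (p i) - f (p j)‖ ≤ (1 + ε) * ‖p i - p j‖)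
    (σ : Finset (Fin n)) (hσ : σ.Nonempty) :
    (1 - ε) ^ 2 * rad2On σ hσ p (fun i => -kDist2 p k hk (p i)) ≤
      rad2On σ hσ (fun i => f (p i)) (fun i => -kDist2 (fun l => f (p l)) k hk (f (p i))) ∧
    rad2On σ hσ (fun i => f (p i)) (fun i => -kDist2 (fun l => f (p l)) k hk (f (p i))) ≤
      (1 + ε) ^ 2 * rad2On σ hσ p (fun i => -kDist2 p k hk (p i)) := by
  have hlower : ∀ i j, (1 - ε) ^ 2 * ‖p i - p j‖ ^ 2 ≤ 1 * ‖f (p i) - f (p j)‖ ^ 2 := fun i j => by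
    simpa [mul_pow] using
      pow_le_pow_left₀ (mul_nonneg (sub_nonneg.2 hε1.le) (norm_nonneg _)) (hf i j).1 2
  have hupper : ∀ i j, 1 * ‖f (p i) - f (p j)‖ ^ 2 ≤ (1 + ε) ^ 2 * ‖p i - p j‖ ^ 2 := fun i j => by
    simpa [mul_pow] using pow_le_pow_left₀ (norm_nonneg _) (hf i j).2 2
  constructor
  · simpa using mul_rad2On_le_mul_rad2On hσ zero_le_one (fun i _ j _ => hlower i j) fun i _ => by
      linarith [mul_kDist2_le_mul_kDist2 hk (sq_nonneg (1 - ε)) (hlower i)]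
  · simpa using mul_rad2On_le_mul_rad2On hσ (sq_nonneg (1 + ε)) (fun i _ j _ => hupper i j)
      fun i _ => by linarith [mul_kDist2_le_mul_kDist2 hk zero_le_one (hupper i)]

theorem stmt_13 {D d n k : ℕ} (hk0 : 0 < k) (hk : k ≤ n)
    (ε : ℝ) (hε0 : 0 < ε) (hε1 : ε < 1)
    (p : Fin n → EuclideanSpace ℝ (Fin D))
    (f : EuclideanSpace ℝ (Fin D) →ₗ[ℝ] EuclideanSpace ℝ (Fin d))
    (hf : ∀ i j : Fin n,
      (1 - ε) * ‖p i - p j‖ ≤ ‖f (p i) - f (p j)‖ ∧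
      ‖f (p i) - f (p j)‖ ≤ (1 + ε) * ‖p i - p j‖)
    (σ : Finset (Fin n)) (hσ : σ.Nonempty) :
    (1 - ε) ^ 2 * rad2On σ hσ p (fun i => -kDist2 p k hk (p i)) ≤
      rad2On σ hσ (fun i => f (p i)) (fun i => -kDist2 (fun l => f (p l)) k hk (f (p i))) ∧
    rad2On σ hσ (fun i => f (p i)) (fun i => -kDist2 (fun l => f (p l)) k hk (f (p i))) ≤
      (1 + ε) ^ 2 * rad2On σ hσ p (fun i => -kDist2 p k hk (p i)) :=
  stmt_13_general hk ε hε1 p f hf σ hσ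
end

section
/- Let X̂ be a finite set of weighted points in ℝ^D with weights assigned by a weighting function, and f : ℝ^D → ℝ^d a map such that for every subset Ŝ ⊆ X̂, (1−ε)·rad²(Ŝ) ≤ rad²(f(S)^) ≤ (1+ε)·rad²(Ŝ), where image weights are recomputed. Then for every α ≥ 0 and every simplex σ: if σ is in the weighted Čech complex of X̂ at parameter α·√(1−ε), then f(σ) is in the weighted Čech complex of f(X̂) at parameter α, and if f(σ) is in the weighted Čech complex of f(X̂) at parameter α, then σ is in the weighted Čech complex of X̂ at parameter α/√(1−ε). Hence the two weighted Čech filtrations are multiplicatively (1−ε)^{−1/2}-interleaved. -/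
/-! Membership in the weighted Čech complex at `α` is the inequality `rad² ≤ α²`, so a
multiplicative bound between two squared radii transfers membership with the parameter
rescaled. Forward, `(1 + ε)(1 - ε) ≤ 1` absorbs the upper distortion bound; backward, the
lower bound gives `rad² ≤ (1 - ε)⁻¹ · rad²(f σ)`. -/

open Finset

/-- A simplex `σ` belongs to the weighted Čech complex at parameter `α`
iff its weighted squared radius is at most `α ^ 2`. -/
def memCech {E : Type*} [NormedAddCommGroup E] {ι : Type*}
    (σ : Finset ι) (hσ : σ.Nonempty) (p : ι → E) (w : ι → ℝ) (α : ℝ) : Prop :=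
  rad2On σ hσ p w ≤ α ^ 2

section

variable {E F ι : Type*} [NormedAddCommGroup E] [NormedAddCommGroup F]
  {σ : Finset ι} {hσ : σ.Nonempty} {p : ι → E} {w : ι → ℝ} {q : ι → F} {v : ι → ℝ}

theorem memCech_of_rad2On_le_mul {c α β : ℝ} (hc : 0 ≤ c)
    (hrad : rad2On σ hσ q v ≤ c * rad2On σ hσ p w) (hαβ : c * β ^ 2 ≤ α ^ 2)
    (h : memCech σ hσ p w β) : memCech σ hσ q v α :=
  calc rad2On σ hσ q v ≤ c * rad2On σ hσ p w := hrad
    _ ≤ c * β ^ 2 := mul_le_mul_of_nonneg_left h hc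
    _ ≤ α ^ 2 := hαβ

end

theorem stmt_14 {D d m : ℕ} (ε : ℝ) (hε0 : 0 < ε) (hε1 : ε < 1)
    (p : Fin m → EuclideanSpace ℝ (Fin D)) (w : Fin m → ℝ)
    (f : EuclideanSpace ℝ (Fin D) → EuclideanSpace ℝ (Fin d))
    (w' : Fin m → ℝ)  -- recomputed weights of the image points
    (hpres : ∀ (σ : Finset (Fin m)) (hσ : σ.Nonempty),
      (1 - ε) * rad2On σ hσ p w ≤ rad2On σ hσ (fun i => f (p i)) w' ∧
      rad2On σ hσ (fun i => f (p i)) w' ≤ (1 + ε) * rad2On σ hσ p w) :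
    ∀ α : ℝ, 0 ≤ α → ∀ (σ : Finset (Fin m)) (hσ : σ.Nonempty),
      (memCech σ hσ p w (α * Real.sqrt (1 - ε)) →
        memCech σ hσ (fun i => f (p i)) w' α) ∧
      (memCech σ hσ (fun i => f (p i)) w' α →
        memCech σ hσ p w (α / Real.sqrt (1 - ε))) := by
  intro α _ σ hσ
  obtain ⟨hlower, hupper⟩ := hpres σ hσ
  have hpos : 0 < 1 - ε := by linarith
  have hsq : Real.sqrt (1 - ε) ^ 2 = 1 - ε := Real.sq_sqrt hpos.le
  refine ⟨memCech_of_rad2On_le_mul (by linarith) hupper ?_,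
    memCech_of_rad2On_le_mul (inv_nonneg.2 hpos.le) ((le_inv_mul_iff₀ hpos).2 hlower) ?_⟩
  · rw [mul_pow, hsq]
    nlinarith [sq_nonneg α, sq_nonneg ε]
  · rw [div_pow, hsq, div_eq_inv_mul]
end

section
/- Suppose a subset I of weighted points of X̂ achieves the max power distance at the center c, i.e. D(c, p̂ᵢ) = rad²(X̂) for i ∈ I and D(c, p̂ⱼ) < rad²(X̂) for j ∉ I. If c were not in the convex hull of {pᵢ : i ∈ I}, then moving c slightly toward its projection onto that convex hull strictly decreases max_i D(·, p̂ᵢ), contradicting minimality. Formally: if c minimizes x ↦ max_i D(x, p̂ᵢ) over ℝ^D, then c ∈ conv{pᵢ : i ∈ I}. -/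
open Finset Filter Topology RealInnerProductSpace

/- If `c` lies outside the convex hull of the active points, the direction towards its nearest
point in that hull makes an acute angle with every `pᵢ - c`, `i ∈ I`, so moving `c` a little in
that direction strictly decreases every active power distance, while the inactive ones stay below
the maximum by continuity. This contradicts the minimality of `c`. -/

section InnerProductSpace

variable {E : Type*} [NormedAddCommGroup E] [InnerProductSpace ℝ E]

theorem exists_forall_inner_sub_pos_of_notMem_convexHull {s : Set E} (hs : s.Finite) {x : E}
    (hx : x ∉ convexHull ℝ s) : ∃ v : E, ∀ q ∈ s, 0 < ⟪v, q - x⟫ := by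
  rcases s.eq_empty_or_nonempty with rfl | hne
  · exact ⟨0, by simp⟩
  set K := convexHull ℝ s
  have hKconv : Convex ℝ K := convex_convexHull ℝ s
  have hKcomplete : IsComplete K := (hs.isCompact_convexHull ℝ).isComplete
  obtain ⟨y, hyK, hy⟩ := exists_norm_eq_iInf_of_complete_convex
    (hne.mono (subset_convexHull ℝ s)) hKcomplete hKconv x
  have hproj := (norm_eq_iInf_iff_real_inner_le_zero hKconv hyK).1 hy
  have hyx : 0 < ‖y - x‖ ^ 2 := by
    have : y - x ≠ 0 := sub_ne_zero.2 fun h => hx (h ▸ hyK)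
    positivity
  refine ⟨y - x, fun q hq => ?_⟩
  have hobtuse : ⟪x - y, q - y⟫ ≤ 0 := hproj q (subset_convexHull ℝ s hq)
  have hsplit : ⟪y - x, q - x⟫ = -⟪x - y, q - y⟫ + ‖y - x‖ ^ 2 := by
    rw [← real_inner_self_eq_norm_sq, ← inner_neg_left, neg_sub, ← inner_add_right,
      sub_add_sub_cancel]
  linarith

theorem norm_add_smul_sub_sq (x v q : E) (t : ℝ) :
    ‖x + t • v - q‖ ^ 2 = ‖x - q‖ ^ 2 - t * (2 * ⟪v, q - x⟫ - t * ‖v‖ ^ 2) := by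
  rw [add_sub_right_comm, norm_add_sq_real, norm_smul, real_inner_smul_right, mul_pow,
    Real.norm_eq_abs, sq_abs, real_inner_comm, ← neg_sub q x, inner_neg_right]
  ring

theorem eventually_norm_add_smul_sub_sq_lt {x v q : E} (h : 0 < ⟪v, q - x⟫) :
    ∀ᶠ t in 𝓝[>] (0 : ℝ), ‖x + t • v - q‖ ^ 2 < ‖x - q‖ ^ 2 := by
  have hsmall : ∀ᶠ t in 𝓝 (0 : ℝ), t * ‖v‖ ^ 2 < 2 * ⟪v, q - x⟫ :=
    (continuous_id.mul continuous_const).continuousAt.eventually_lt continuousAt_const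
      (by simpa using h)
  filter_upwards [nhdsWithin_le_nhds hsmall, self_mem_nhdsWithin] with t ht (ht0 : 0 < t)
  rw [norm_add_smul_sub_sq]
  nlinarith

end InnerProductSpace

theorem Finset.eventually_sup'_lt {α ι : Type*} [TopologicalSpace α] {l : Filter α} {a : α}
    (hl : l ≤ 𝓝 a) {s : Finset ι} (hs : s.Nonempty) {φ : ι → α → ℝ}
    (hcont : ∀ i ∈ s, ContinuousAt (φ i) a)
    (hactive : ∀ i ∈ s, φ i a = s.sup' hs (φ · a) → ∀ᶠ x in l, φ i x < φ i a) :
    ∀ᶠ x in l, s.sup' hs (φ · x) < s.sup' hs (φ · a) := by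
  simp_rw [Finset.sup'_lt_iff]
  refine (eventually_all_finset s).2 fun i hi => ?_
  rcases (Finset.le_sup' (φ · a) hi).eq_or_lt with hmax | hlt
  · exact (hactive i hi hmax).mono fun x hx => hmax ▸ hx
  · exact hl ((hcont i hi).eventually_lt continuousAt_const hlt)

theorem stmt_16 {D m : ℕ}
    (p : Fin m → EuclideanSpace ℝ (Fin D)) (w : Fin m → ℝ)
    (hne : (Finset.univ : Finset (Fin m)).Nonempty)
    (c : EuclideanSpace ℝ (Fin D))
    (hmin : ∀ y, Finset.univ.sup' hne (fun i => ‖c - p i‖ ^ 2 - w i) ≤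
          Finset.univ.sup' hne (fun i => ‖y - p i‖ ^ 2 - w i))
    (I : Finset (Fin m))
    (hI : ∀ i, i ∈ I ↔
      ‖c - p i‖ ^ 2 - w i = Finset.univ.sup' hne (fun j => ‖c - p j‖ ^ 2 - w j)) :
    c ∈ convexHull ℝ (p '' {i : Fin m | i ∈ I}) := by
  by_contra hc
  obtain ⟨v, hv⟩ := exists_forall_inner_sub_pos_of_notMem_convexHull (Set.toFinite _) hc
  have hactive : ∀ i ∈ univ, ‖c - p i‖ ^ 2 - w i = univ.sup' hne (fun j => ‖c - p j‖ ^ 2 - w j) →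
      ∀ᶠ t in 𝓝[>] (0 : ℝ), ‖c + t • v - p i‖ ^ 2 - w i < ‖c - p i‖ ^ 2 - w i := by
    intro i _ hi
    filter_upwards [eventually_norm_add_smul_sub_sq_lt (hv _ ⟨i, (hI i).2 hi, rfl⟩)] with t ht
    linarith
  have hdecrease := Finset.eventually_sup'_lt (l := 𝓝[>] (0 : ℝ)) nhdsWithin_le_nhds hne
    (φ := fun i t => ‖c + t • v - p i‖ ^ 2 - w i) (fun i _ => by fun_prop)
    (by simpa only [zero_smul, add_zero] using hactive)
  obtain ⟨t, ht⟩ := hdecrease.exists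
  exact (hmin (c + t • v)).not_gt (by simpa only [zero_smul, add_zero] using ht)
end

section
/- Let P ⊂ ℝ^D be finite, and let f : ℝ^D → ℝ^d satisfy (1−ε)‖x−y‖ ≤ ‖f(x)−f(y)‖ ≤ (1+ε)‖x−y‖ for all x,y ∈ P. Then for all x, y ∈ P, the k-distance-based Vietoris–Rips filtration value of the pair, namely the power distance between the weighted points (x, −d²_{P,k}(x)) and (y, −d²_{P,k}(y)) with recomputed image weights, satisfies (1−ε)²·(‖x−y‖² + d²_{P,k}(x) + d²_{P,k}(y)) ≤ ‖f(x)−f(y)‖² + d²_{f(P),k}(f(x)) + d²_{f(P),k}(f(y)) ≤ (1+ε)²·(‖x−y‖² + d²_{P,k}(x) + d²_{P,k}(y)). -/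
/-
Both inequalities hold term by term. The squared distances scale by a factor in
[(1 - ε)², (1 + ε)²], hence so does the average of squared distances over every
k-subset of P, and therefore so does its minimum, the squared k-distance.
-/

open Finset

section KDist2

variable {n k : ℕ} {E F : Type*} [NormedAddCommGroup E] [NormedAddCommGroup F]
  {p : Fin n → E} {q : Fin n → F} {x : E} {y : F} {c : ℝ}

lemma kDist2_le_of_mem_powersetCard (hk : k ≤ n) {S : Finset (Fin n)}
    (hS : S ∈ (univ : Finset (Fin n)).powersetCard k) :
    kDist2 p k hk x ≤ (1 / (k : ℝ)) * ∑ i ∈ S, ‖x - p i‖ ^ 2 :=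
  inf'_le _ hS

lemma exists_kDist2_eq (hk : k ≤ n) :
    ∃ S ∈ (univ : Finset (Fin n)).powersetCard k,
      kDist2 p k hk x = (1 / (k : ℝ)) * ∑ i ∈ S, ‖x - p i‖ ^ 2 :=
  exists_mem_eq_inf' _ _

lemma kDist2_le_mul_kDist2 (hk : k ≤ n) (h : ∀ i, ‖y - q i‖ ^ 2 ≤ c * ‖x - p i‖ ^ 2) :
    kDist2 q k hk y ≤ c * kDist2 p k hk x := by
  obtain ⟨S, hS, hpS⟩ := exists_kDist2_eq (p := p) (x := x) hk
  calc kDist2 q k hk y ≤ (1 / (k : ℝ)) * ∑ i ∈ S, ‖y - q i‖ ^ 2 :=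
        kDist2_le_of_mem_powersetCard hk hS
    _ ≤ (1 / (k : ℝ)) * ∑ i ∈ S, c * ‖x - p i‖ ^ 2 := by
        gcongr with i
        exact h i
    _ = c * kDist2 p k hk x := by rw [hpS, ← mul_sum]; ring

lemma mul_kDist2_le_kDist2 (hk : k ≤ n) (hc : 0 ≤ c)
    (h : ∀ i, c * ‖x - p i‖ ^ 2 ≤ ‖y - q i‖ ^ 2) :
    c * kDist2 p k hk x ≤ kDist2 q k hk y := by
  obtain ⟨S, hS, hqS⟩ := exists_kDist2_eq (p := q) (x := y) hk
  calc c * kDist2 p k hk x ≤ c * ((1 / (k : ℝ)) * ∑ i ∈ S, ‖x - p i‖ ^ 2) := by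
        gcongr
        exact kDist2_le_of_mem_powersetCard hk hS
    _ = (1 / (k : ℝ)) * ∑ i ∈ S, c * ‖x - p i‖ ^ 2 := by rw [← mul_sum]; ring
    _ ≤ kDist2 q k hk y := by
        rw [hqS]
        gcongr with i
        exact h i

end KDist2

theorem stmt_18_general {D d n k : ℕ} (hk : k ≤ n)
    (ε : ℝ) (hε1 : ε < 1)
    (p : Fin n → EuclideanSpace ℝ (Fin D))
    (f : EuclideanSpace ℝ (Fin D) →ₗ[ℝ] EuclideanSpace ℝ (Fin d))
    (hf : ∀ i j : Fin n,
      (1 - ε) * ‖p i - p j‖ ≤ ‖f (p i) - f (p j)‖ ∧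
      ‖f (p i) - f (p j)‖ ≤ (1 + ε) * ‖p i - p j‖) :
    ∀ i j : Fin n,
      (1 - ε) ^ 2 *
          (‖p i - p j‖ ^ 2 + kDist2 p k hk (p i) + kDist2 p k hk (p j)) ≤
        ‖f (p i) - f (p j)‖ ^ 2 + kDist2 (fun l => f (p l)) k hk (f (p i)) +
          kDist2 (fun l => f (p l)) k hk (f (p j)) ∧
      ‖f (p i) - f (p j)‖ ^ 2 + kDist2 (fun l => f (p l)) k hk (f (p i)) +
          kDist2 (fun l => f (p l)) k hk (f (p j)) ≤
        (1 + ε) ^ 2 *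
          (‖p i - p j‖ ^ 2 + kDist2 p k hk (p i) + kDist2 p k hk (p j)) := by
  have lower : ∀ a b, (1 - ε) ^ 2 * ‖p a - p b‖ ^ 2 ≤ ‖f (p a) - f (p b)‖ ^ 2 := fun a b => by
    rw [← mul_pow]
    exact pow_le_pow_left₀ (mul_nonneg (sub_nonneg.mpr hε1.le) (norm_nonneg _)) (hf a b).1 2
  have upper : ∀ a b, ‖f (p a) - f (p b)‖ ^ 2 ≤ (1 + ε) ^ 2 * ‖p a - p b‖ ^ 2 := fun a b => by
    rw [← mul_pow]
    exact pow_le_pow_left₀ (norm_nonneg _) (hf a b).2 2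
  intro i j
  have ki_lower := mul_kDist2_le_kDist2 hk (sq_nonneg (1 - ε)) (lower i)
  have kj_lower := mul_kDist2_le_kDist2 hk (sq_nonneg (1 - ε)) (lower j)
  have ki_upper := kDist2_le_mul_kDist2 hk (upper i)
  have kj_upper := kDist2_le_mul_kDist2 hk (upper j)
  constructor <;> linarith [lower i j, upper i j]

theorem stmt_18 {D d n k : ℕ} (hk0 : 0 < k) (hk : k ≤ n)
    (ε : ℝ) (hε0 : 0 < ε) (hε1 : ε < 1)
    (p : Fin n → EuclideanSpace ℝ (Fin D))
    (f : EuclideanSpace ℝ (Fin D) →ₗ[ℝ] EuclideanSpace ℝ (Fin d))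
    (hf : ∀ i j : Fin n,
      (1 - ε) * ‖p i - p j‖ ≤ ‖f (p i) - f (p j)‖ ∧
      ‖f (p i) - f (p j)‖ ≤ (1 + ε) * ‖p i - p j‖) :
    ∀ i j : Fin n,
      (1 - ε) ^ 2 *
          (‖p i - p j‖ ^ 2 + kDist2 p k hk (p i) + kDist2 p k hk (p j)) ≤
        ‖f (p i) - f (p j)‖ ^ 2 + kDist2 (fun l => f (p l)) k hk (f (p i)) +
          kDist2 (fun l => f (p l)) k hk (f (p j)) ∧
      ‖f (p i) - f (p j)‖ ^ 2 + kDist2 (fun l => f (p l)) k hk (f (p i)) +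
          kDist2 (fun l => f (p l)) k hk (f (p j)) ≤
        (1 + ε) ^ 2 *
          (‖p i - p j‖ ^ 2 + kDist2 p k hk (p i) + kDist2 p k hk (p j)) :=
  stmt_18_general hk ε hε1 p f hf
end
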